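/- arXiv:0902.2355 — 9 statements merged into one kernel-verified Lean document; each statement's English description precedes it below -/
import Mathlib

section
/- In a dagger category with a zero object and kernels that are dagger monos, every kernel satisfies m^⊥⊥ = m, where m^⊥ := ker(m†). -/
open CategoryTheory Limits

universe v u

class Dagger (C : Type u) [Category.{v} C] [HasZeroMorphisms C] where
  dag : ∀ {X Y : C}, (X ⟶ Y) → (Y ⟶ X)
  dag_dag : ∀ {X Y : C} (f : X ⟶ Y), dag (dag f) = f
  dag_comp : ∀ {X Y Z : C} (f : X ⟶ Y) (g : Y ⟶ Z), dag (f ≫ g) = dag g ≫ dag f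
  dag_id : ∀ (X : C), dag (𝟙 X) = 𝟙 X
  dag_zero : ∀ (X Y : C), dag (0 : X ⟶ Y) = 0

namespace Dagger

variable {C : Type u} [Category.{v} C] [HasZeroMorphisms C] [Dagger C]

/-- `f` is a dagger mono: `f† ∘ f = id`. -/
def DaggerMono {X Y : C} (f : X ⟶ Y) : Prop := f ≫ dag f = 𝟙 X

/-- `f` is a dagger epi: `f ∘ f† = id`. -/
def DaggerEpi {X Y : C} (f : X ⟶ Y) : Prop := dag f ≫ f = 𝟙 Y

/-- `k` is a kernel of `f`. -/
structure IsKer {K X Y : C} (f : X ⟶ Y) (k : K ⟶ X) : Prop where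
  comp_zero : k ≫ f = 0
  lift : ∀ {Z : C} (g : Z ⟶ X), g ≫ f = 0 → ∃! h : Z ⟶ K, h ≫ k = g

/-- `k` is a kernel of `f` which is moreover a dagger mono. -/
def IsDagKer {K X Y : C} (f : X ⟶ Y) (k : K ⟶ X) : Prop :=
  IsKer f k ∧ DaggerMono k

/-- `k` is a (dagger-monic) kernel of some map. -/
def KernelMap {K X : C} (k : K ⟶ X) : Prop :=
  ∃ (Y : C) (f : X ⟶ Y), IsDagKer f k

/-- order of subobjects, by factorisation -/
def SubLE {M N X : C} (m : M ⟶ X) (n : N ⟶ X) : Prop :=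
  ∃ φ : M ⟶ N, φ ≫ n = m

/-- equality of subobjects -/
def SubEq {M N X : C} (m : M ⟶ X) (n : N ⟶ X) : Prop :=
  SubLE m n ∧ SubLE n m

/-- `p` represents the orthocomplement `m^⊥ = ker(m†)` of `m`. -/
def IsOrthoOf {M P X : C} (m : M ⟶ X) (p : P ⟶ X) : Prop :=
  IsDagKer (dag m) p

/-- `w` is the meet (intersection) of the kernels `m` and `n` in `KSub(X)`. -/
def IsMeet {M N W X : C} (m : M ⟶ X) (n : N ⟶ X) (w : W ⟶ X) : Prop :=
  KernelMap w ∧ SubLE w m ∧ SubLE w n ∧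
    ∀ {K : C} (k : K ⟶ X), KernelMap k → SubLE k m → SubLE k n → SubLE k w

/-- `j` is the join `m ∨ n = (m^⊥ ∧ n^⊥)^⊥` in `KSub(X)`. -/
def IsJoin {M N J X : C} (m : M ⟶ X) (n : N ⟶ X) (j : J ⟶ X) : Prop :=
  ∃ (MP NP W : C) (mp : MP ⟶ X) (np : NP ⟶ X) (w : W ⟶ X),
    IsOrthoOf m mp ∧ IsOrthoOf n np ∧ IsMeet mp np w ∧ IsOrthoOf w j

/-- `p` represents the pullback `f⁻¹(n) = ker(coker(n) ∘ f)` of the kernel `n` along `f`. -/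
def IsInvImg {N P X Y : C} (f : X ⟶ Y) (n : N ⟶ Y) (p : P ⟶ X) : Prop :=
  ∃ (NP : C) (np : NP ⟶ Y), IsOrthoOf n np ∧ IsDagKer (f ≫ dag np) p

/-- `i` represents the image `ker(coker(f)) = ker(ker(f†)†)` of `f`. -/
def IsImg {I X Y : C} (f : X ⟶ Y) (i : I ⟶ Y) : Prop :=
  ∃ (K : C) (k : K ⟶ Y), IsDagKer (dag f) k ∧ IsDagKer (dag k) i

/-- zero-mono: `m ∘ f = 0` implies `f = 0`. -/
def ZeroMono {X Y : C} (m : X ⟶ Y) : Prop :=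
  ∀ {Z : C} (f : Z ⟶ X), f ≫ m = 0 → f = 0

/-- zero-epi: `f ∘ e = 0` implies `f = 0`. -/
def ZeroEpi {X Y : C} (e : X ⟶ Y) : Prop :=
  ∀ {Z : C} (f : Y ⟶ Z), e ≫ f = 0 → f = 0

end Dagger

/-- A dagger kernel category: a dagger category with a zero object in which
every morphism has a kernel that is a dagger mono. -/
class DagKerCat (C : Type u) [Category.{v} C] [HasZeroMorphisms C]
    [HasZeroObject C] extends Dagger C where
  hasKer : ∀ {X Y : C} (f : X ⟶ Y), ∃ (K : C) (k : K ⟶ X), Dagger.IsDagKer f k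

/-! If `m = ker f`, then `f` kills `m`, so it factors through `p† = coker m`; as `q = ker p†`,
it kills `q` too, whence `q ≤ m`. The converse `m ≤ q` holds for any `m`, because
`m ≫ p† = (p ≫ m†)† = 0`. -/

namespace Dagger

variable {C : Type u} [Category.{v} C] [HasZeroMorphisms C]

theorem IsKer.subLE_of_comp_eq_zero {K X Y Z : C} {f : X ⟶ Y} {k : K ⟶ X} (hk : IsKer f k)
    {g : Z ⟶ X} (hg : g ≫ f = 0) : SubLE g k :=
  let ⟨φ, hφ, _⟩ := hk.lift g hg
  ⟨φ, hφ⟩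

variable [Dagger C]

theorem dag_comp_dag_eq_zero {X Y Z : C} {f : X ⟶ Y} {g : Y ⟶ Z} (h : f ≫ g = 0) :
    dag g ≫ dag f = 0 := by
  rw [← dag_comp, h, dag_zero]

theorem IsOrthoOf.comp_dag_eq_zero {M P X : C} {m : M ⟶ X} {p : P ⟶ X} (hp : IsOrthoOf m p) :
    m ≫ dag p = 0 := by
  simpa only [dag_dag] using dag_comp_dag_eq_zero hp.1.comp_zero

theorem IsOrthoOf.exists_dag_comp_eq {M P X Y : C} {m : M ⟶ X} {p : P ⟶ X}
    (hp : IsOrthoOf m p) {f : X ⟶ Y} (hf : m ≫ f = 0) : ∃ h : P ⟶ Y, dag p ≫ h = f := by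
  obtain ⟨h, hh⟩ := hp.1.subLE_of_comp_eq_zero (dag_comp_dag_eq_zero hf)
  exact ⟨dag h, by rw [← dag_comp, hh, dag_dag]⟩

theorem IsOrthoOf.subLE_ortho {M P Q X : C} {m : M ⟶ X} {p : P ⟶ X} {q : Q ⟶ X}
    (hp : IsOrthoOf m p) (hq : IsOrthoOf p q) : SubLE m q :=
  hq.1.subLE_of_comp_eq_zero hp.comp_dag_eq_zero

theorem IsKer.ortho_ortho_subLE {M P Q X Y : C} {f : X ⟶ Y} {m : M ⟶ X} {p : P ⟶ X}
    {q : Q ⟶ X} (hm : IsKer f m) (hp : IsOrthoOf m p) (hq : IsOrthoOf p q) : SubLE q m := by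
  obtain ⟨h, rfl⟩ := hp.exists_dag_comp_eq hm.comp_zero
  exact hm.subLE_of_comp_eq_zero (by rw [← Category.assoc, hq.1.comp_zero, zero_comp])

end Dagger

open Dagger in
/-- every kernel satisfies `m^⊥⊥ = m` (as subobjects),
where `m^⊥ = ker(m†)`. -/
theorem stmt0 {C : Type u} [Category.{v} C] [HasZeroMorphisms C] [HasZeroObject C]
    [DagKerCat C] {M X P Q : C} (m : M ⟶ X) (hm : KernelMap m)
    (p : P ⟶ X) (hp : IsOrthoOf m p)
    (q : Q ⟶ X) (hq : IsOrthoOf p q) :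
    SubEq q m := by
  obtain ⟨_, _, hf, -⟩ := hm
  exact ⟨hf.ortho_ortho_subLE hp hq, hp.subLE_ortho hq⟩
end

section
/- In a dagger kernel category, a morphism f factors through g^⊥ if and only if g† ∘ f = 0, if and only if f† ∘ g = 0, if and only if g factors through f^⊥. Consequently (−)^⊥ is an order-reversing isomorphism KSub(X) ≅ KSub(X)^op. -/
open CategoryTheory Limits

universe v u

namespace Dagger

variable {C : Type u} [Category.{v} C] [HasZeroMorphisms C] [Dagger C]

theorem comp_dag_eq_zero_comm {V W X : C} (f : W ⟶ X) (g : V ⟶ X) :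
    f ≫ dag g = 0 ↔ g ≫ dag f = 0 := by
  constructor <;> intro h <;>
  · simpa only [dag_comp, dag_dag, dag_zero] using congrArg dag h

theorem IsOrthoOf.factors_iff_comp_dag_eq_zero {V W X GP : C} {g : V ⟶ X} {gp : GP ⟶ X}
    (hgp : IsOrthoOf g gp) (f : W ⟶ X) :
    (∃ h : W ⟶ GP, h ≫ gp = f) ↔ f ≫ dag g = 0 := by
  constructor
  · rintro ⟨h, rfl⟩
    rw [Category.assoc, hgp.1.comp_zero, comp_zero]
  · intro hf
    obtain ⟨h, hh, -⟩ := hgp.1.lift f hf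
    exact ⟨h, hh⟩

theorem IsOrthoOf.subLE_iff_subLE {M N X MP NP : C} {m : M ⟶ X} {n : N ⟶ X}
    {mp : MP ⟶ X} {np : NP ⟶ X} (hmp : IsOrthoOf m mp) (hnp : IsOrthoOf n np) :
    SubLE m np ↔ SubLE n mp := by
  rw [SubLE, SubLE, hnp.factors_iff_comp_dag_eq_zero, comp_dag_eq_zero_comm,
    hmp.factors_iff_comp_dag_eq_zero]

end Dagger

open Dagger in
/-- `f` factors through `g^⊥` iff `g† ∘ f = 0` iff `f† ∘ g = 0` iff
`g` factors through `f^⊥`; consequently `(−)^⊥` is an order-reversing bijection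
on kernel subobjects. -/
theorem stmt1 {C : Type u} [Category.{v} C] [HasZeroMorphisms C] [HasZeroObject C]
    [DagKerCat C] {W V X FP GP : C} (f : W ⟶ X) (g : V ⟶ X)
    (fp : FP ⟶ X) (hfp : IsOrthoOf f fp) (gp : GP ⟶ X) (hgp : IsOrthoOf g gp) :
    ((∃ h : W ⟶ GP, h ≫ gp = f) ↔ f ≫ Dagger.dag g = 0) ∧
    (f ≫ Dagger.dag g = 0 ↔ g ≫ Dagger.dag f = 0) ∧
    (g ≫ Dagger.dag f = 0 ↔ ∃ h : V ⟶ FP, h ≫ fp = g) ∧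
    (∀ {M N MP NP : C} (m : M ⟶ X) (n : N ⟶ X) (mp : MP ⟶ X) (np : NP ⟶ X),
      KernelMap m → KernelMap n → IsOrthoOf m mp → IsOrthoOf n np →
      (SubLE m np ↔ SubLE n mp)) :=
  ⟨hgp.factors_iff_comp_dag_eq_zero f, comp_dag_eq_zero_comm f g,
    (hfp.factors_iff_comp_dag_eq_zero g).symm,
    fun _ _ _ _ _ _ hmp hnp => hmp.subLE_iff_subLE hnp⟩
end

section
/- In a dagger kernel category, if m ≤ n for monos m, n, via m = n ∘ φ, then: (a) if m and n are dagger monos then φ is a dagger mono; (b) if m is a kernel then φ is a kernel (namely φ = ker(f ∘ n) when m = ker(f)). -/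
open CategoryTheory Limits

universe v u

namespace Dagger

variable {C : Type u} [Category.{v} C] [HasZeroMorphisms C] {M N X Y : C}

theorem DaggerMono.of_comp [Dagger C] {φ : M ⟶ N} {n : N ⟶ X} (hφn : DaggerMono (φ ≫ n))
    (hn : DaggerMono n) : DaggerMono φ :=
  calc φ ≫ dag φ = φ ≫ (n ≫ dag n) ≫ dag φ := by rw [hn, Category.id_comp]
    _ = (φ ≫ n) ≫ dag (φ ≫ n) := by simp only [dag_comp, Category.assoc]
    _ = 𝟙 M := hφn

theorem IsKer.of_comp_mono {f : X ⟶ Y} {φ : M ⟶ N} {n : N ⟶ X} [Mono n]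
    (h : IsKer f (φ ≫ n)) : IsKer (n ≫ f) φ where
  comp_zero := by rw [← Category.assoc, h.comp_zero]
  lift g hg := by
    obtain ⟨k, hk, huniq⟩ := h.lift (g ≫ n) (by rwa [Category.assoc])
    refine ⟨k, (cancel_mono n).mp ?_, fun k' hk' => huniq k' ?_⟩
    · rwa [Category.assoc]
    · rw [← hk', Category.assoc]

end Dagger

open Dagger in
theorem stmt2_general {C : Type u} [Category.{v} C] [HasZeroMorphisms C] [HasZeroObject C]
    [DagKerCat C] {M N X Y : C} (m : M ⟶ X) (n : N ⟶ X) [Mono n]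
    (φ : M ⟶ N) (hφ : φ ≫ n = m) :
    (DaggerMono m → DaggerMono n → DaggerMono φ) ∧
    (∀ (f : X ⟶ Y), IsKer f m → IsKer (n ≫ f) φ) := by
  subst hφ
  exact ⟨fun hm hn => hm.of_comp hn, fun _ hk => hk.of_comp_mono⟩

open Dagger in
/-- if `m ≤ n` for monos `m, n` via `m = n ∘ φ`, then (a) if `m, n`
are dagger monos so is `φ`; (b) if `m` is a kernel of `f` then `φ` is a kernel,
namely `φ = ker(f ∘ n)`. -/
theorem stmt2 {C : Type u} [Category.{v} C] [HasZeroMorphisms C] [HasZeroObject C]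
    [DagKerCat C] {M N X Y : C} (m : M ⟶ X) (n : N ⟶ X) [Mono m] [Mono n]
    (φ : M ⟶ N) (hφ : φ ≫ n = m) :
    (DaggerMono m → DaggerMono n → DaggerMono φ) ∧
    (∀ (f : X ⟶ Y), IsKer f m → IsKer (n ≫ f) φ) :=
  stmt2_general m n φ hφ
end

section
/- In a dagger kernel category, the pullback of a kernel n : N ↣ Y along any morphism f : X → Y exists and is given by f⁻¹(n) = ker(coker(n) ∘ f), which is again a kernel. Moreover, if f is a dagger epi, then the induced morphism f' : M → N on the pullback is also a dagger epi. -/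
open CategoryTheory Limits

universe v u

/-!
The cokernel of a kernel `n` is `n^⊥†`, and `n` is recovered as its kernel. Since
`f⁻¹(n) = ker(n^⊥† ∘ f)` is the kernel of a composite through `n^⊥†`, the universal
property of the pullback of `n` along `f` is the universal property of that kernel. When `f`
is a dagger epi, `n ∘ f†` factors through `f⁻¹(n)` as some `d`; dualising
`f' = n† ∘ f ∘ f⁻¹(n)` gives `f'† = d`, and `f' ∘ d = id` because `n` is monic.
-/

namespace Dagger

variable {C : Type u} [Category.{v} C] [HasZeroMorphisms C]
variable {M N X Y W : C} {f : X ⟶ Y} {g : Y ⟶ W} {n : N ⟶ Y} {m : M ⟶ X} {f' : M ⟶ N}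

theorem IsKer.cancel_mono {K Z : C} {k : K ⟶ X} (hk : IsKer f k) {a b : Z ⟶ K}
    (h : a ≫ k = b ≫ k) : a = b := by
  obtain ⟨c, -, hc⟩ := hk.lift (a ≫ k) (by rw [Category.assoc, hk.comp_zero, Limits.comp_zero])
  exact (hc a rfl).trans (hc b h.symm).symm

theorem IsKer.isPullback_of_comp (hn : IsKer g n) (hm : IsKer (f ≫ g) m)
    (hf' : m ≫ f = f' ≫ n) {Z : C} (a : Z ⟶ X) (b : Z ⟶ N) (hab : a ≫ f = b ≫ n) :
    ∃! c : Z ⟶ M, c ≫ m = a ∧ c ≫ f' = b := by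
  obtain ⟨c, hc, hc_uniq⟩ :=
    hm.lift a (by rw [← Category.assoc, hab, Category.assoc, hn.comp_zero, Limits.comp_zero])
  refine ⟨c, ⟨hc, hn.cancel_mono ?_⟩, fun c' hc' => hc_uniq c' hc'.1⟩
  rw [Category.assoc, ← hf', ← Category.assoc, hc, hab]

variable [Dagger C]

theorem dag_comp_dag_eq_zero_s3 {A B D : C} {a : A ⟶ B} {b : B ⟶ D} (h : a ≫ b = 0) :
    dag b ≫ dag a = 0 := by
  rw [← dag_comp, h, dag_zero]

theorem IsOrthoOf.isDagKer_dag {NP : C} {np : NP ⟶ Y} (hn : KernelMap n)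
    (hnp : IsOrthoOf n np) : IsDagKer (dag np) n := by
  obtain ⟨Q, q, hqk, hn_mono⟩ := hn
  obtain ⟨φ, hφ, -⟩ := hnp.1.lift (dag q) (dag_comp_dag_eq_zero_s3 hqk.comp_zero)
  have hq : q = dag np ≫ dag φ := by rw [← dag_dag q, ← hφ, dag_comp]
  refine ⟨⟨by simpa only [dag_dag] using dag_comp_dag_eq_zero_s3 hnp.1.comp_zero, ?_⟩, hn_mono⟩
  intro Z h hh
  exact hqk.lift h (by rw [hq, ← Category.assoc, hh, zero_comp])

theorem IsDagKer.daggerEpi_of_comp (hn : IsDagKer g n) (hm : IsDagKer (f ≫ g) m)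
    (hf' : m ≫ f = f' ≫ n) (hf : DaggerEpi f) : DaggerEpi f' := by
  have hf : dag f ≫ f = 𝟙 Y := hf
  have hn_mono : n ≫ dag n = 𝟙 N := hn.2
  have hm_mono : m ≫ dag m = 𝟙 M := hm.2
  obtain ⟨d, hd, -⟩ := hm.1.lift (n ≫ dag f) (by
    rw [Category.assoc, ← Category.assoc (dag f), hf, Category.id_comp, hn.1.comp_zero])
  have hf'_eq : f' = m ≫ f ≫ dag n := by
    rw [← Category.assoc, hf', Category.assoc, hn_mono, Category.comp_id]
  have hf'_dag : dag f' = d := by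
    rw [hf'_eq, dag_comp, dag_comp, dag_dag, ← hd, Category.assoc, hm_mono, Category.comp_id]
  change dag f' ≫ f' = 𝟙 N
  rw [hf'_dag]
  apply hn.1.cancel_mono
  rw [Category.assoc, ← hf', ← Category.assoc, hd, Category.assoc, hf, Category.comp_id,
    Category.id_comp]

end Dagger

open Dagger in
/-- the pullback of a kernel `n` along `f` exists and is given by
`f⁻¹(n) = ker(coker(n) ∘ f)`, which is again a kernel; if `f` is a dagger epi,
then so is the induced map `f'` on the pullback. -/
theorem stmt3 {C : Type u} [Category.{v} C] [HasZeroMorphisms C] [HasZeroObject C]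
    [DagKerCat C] {N Y X M NP : C} (n : N ⟶ Y) (hn : KernelMap n) (f : X ⟶ Y)
    (np : NP ⟶ Y) (hnp : IsOrthoOf n np)
    (m : M ⟶ X) (hm : IsDagKer (f ≫ Dagger.dag np) m) :
    KernelMap m ∧
    ∃ f' : M ⟶ N, m ≫ f = f' ≫ n ∧
      (∀ {Z : C} (a : Z ⟶ X) (b : Z ⟶ N), a ≫ f = b ≫ n →
        ∃! c : Z ⟶ M, c ≫ m = a ∧ c ≫ f' = b) ∧
      (DaggerEpi f → DaggerEpi f') := by
  have hn_ker : IsDagKer (dag np) n := hnp.isDagKer_dag hn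
  obtain ⟨f', hf', -⟩ := hn_ker.1.lift (m ≫ f) (by rw [Category.assoc]; exact hm.1.comp_zero)
  exact ⟨⟨NP, _, hm⟩, f', hf'.symm, hn_ker.1.isPullback_of_comp hm.1 hf'.symm,
    hn_ker.daggerEpi_of_comp hm hf'.symm⟩
end

section
/- In a dagger category with dagger equalisers in which every dagger mono is a kernel, every zero-epi is an (ordinary) epi. -/
open CategoryTheory Limits

universe v u

namespace Dagger

variable {C : Type u} [Category.{v} C] [HasZeroMorphisms C]

theorem IsKer.isSplitEpi_of_eq_zero {K X Y : C} {u : X ⟶ Y} {k : K ⟶ X} (hk : IsKer u k)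
    (hu : u = 0) : IsSplitEpi k := by
  obtain ⟨s, hs, -⟩ := hk.lift (𝟙 X) (by rw [hu, Limits.comp_zero])
  exact ⟨⟨s, hs⟩⟩

theorem ZeroEpi.eq_zero_of_fac_ker {A X Y K : C} {e : A ⟶ X} (he : ZeroEpi e) {u : X ⟶ Y}
    {k : K ⟶ X} (hk : IsKer u k) {c : A ⟶ K} (hc : c ≫ k = e) : u = 0 :=
  he u (by rw [← hc, Category.assoc, hk.comp_zero, Limits.comp_zero])

end Dagger

open Dagger in
theorem stmt8_general {C : Type u} [Category.{v} C] [HasZeroMorphisms C]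
    [Dagger C]
    (heq : ∀ {X Y : C} (f g : X ⟶ Y), ∃ (E : C) (e : E ⟶ X),
      (e ≫ f = e ≫ g ∧ ∀ {Z : C} (h : Z ⟶ X), h ≫ f = h ≫ g →
        ∃! c : Z ⟶ E, c ≫ e = h) ∧ DaggerMono e)
    (hdm : ∀ {X Y : C} (m : X ⟶ Y), DaggerMono m →
      ∃ (Z : C) (u : Y ⟶ Z), IsKer u m)
    {A B : C} (e : A ⟶ B) (hz : ZeroEpi e) : Epi e := by
  refine ⟨fun {Z} f g hfg => ?_⟩
  obtain ⟨E, m, ⟨hm, hlift⟩, hm_dag⟩ := heq f g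
  obtain ⟨W, u, hker⟩ := hdm m hm_dag
  obtain ⟨c, hc, -⟩ := hlift e hfg
  -- `e` factors through the equaliser `m = ker u`, so `u = 0` and the equaliser is split epi
  have := hker.isSplitEpi_of_eq_zero (hz.eq_zero_of_fac_ker hker hc)
  exact (cancel_epi m).1 hm

open Dagger in
/-- in a dagger category with a zero object and dagger equalisers,
in which every dagger mono is a kernel, every zero-epi is an epi. -/
theorem stmt8 {C : Type u} [Category.{v} C] [HasZeroMorphisms C] [HasZeroObject C]
    [Dagger C]
    (heq : ∀ {X Y : C} (f g : X ⟶ Y), ∃ (E : C) (e : E ⟶ X),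
      (e ≫ f = e ≫ g ∧ ∀ {Z : C} (h : Z ⟶ X), h ≫ f = h ≫ g →
        ∃! c : Z ⟶ E, c ≫ e = h) ∧ DaggerMono e)
    (hdm : ∀ {X Y : C} (m : X ⟶ Y), DaggerMono m →
      ∃ (Z : C) (u : Y ⟶ Z), IsKer u m)
    {A B : C} (e : A ⟶ B) (hz : ZeroEpi e) : Epi e :=
  stmt8_general heq hdm e hz
end

section
/- In a dagger kernel category, every morphism f : X → Y factors as f = i_f ∘ e_f where i_f = ker(coker(f)) is a kernel (the image) and e_f is a zero-epi; moreover the morphisms arising as e_f are precisely the zero-epis. -/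
/-! With `k = ker f†` and `i = ker k†`, the adjoint `k†` is a cokernel of `f`: `f ≫ k† = 0`, and
every `u` with `f ≫ u = 0` factors through `k†`, hence also kills `i`. So `f` factors through `i`,
and since `i` is dagger monic the factor is `f ≫ i†`. It is zero-epi because `(f ≫ i†) ≫ g = 0`
forces `i ≫ i† ≫ g = 0`, i.e. `g = 0`. If `f` is itself zero-epi then `k† = 0`, and a dagger
kernel of the zero map is an isomorphism, inverted by its adjoint. -/

open CategoryTheory Limits

universe v u

namespace Dagger

variable {C : Type u} [Category.{v} C] [HasZeroMorphisms C] [Dagger C]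

theorem comp_eq_zero_iff_dag_comp_dag {X Y Z : C} {f : X ⟶ Y} {g : Y ⟶ Z} :
    f ≫ g = 0 ↔ dag g ≫ dag f = 0 := by
  constructor <;> intro h
  · rw [← dag_comp, h, dag_zero]
  · rw [← dag_dag f, ← dag_dag g, ← dag_comp, h, dag_zero]

theorem DaggerMono.comp_dag_eq_of_comp_eq {W X Y : C} {m : X ⟶ Y} (hm : DaggerMono m)
    {h : W ⟶ X} {g : W ⟶ Y} (hg : h ≫ m = g) : g ≫ dag m = h := by
  rw [← hg, Category.assoc, show m ≫ dag m = 𝟙 X from hm, Category.comp_id]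

theorem IsDagKer.isIso_of_eq_zero {K X Y : C} {f : X ⟶ Y} {k : K ⟶ X} (hk : IsDagKer f k)
    (hf : f = 0) : IsIso k := by
  obtain ⟨φ, hφ, -⟩ := hk.1.lift (𝟙 X) (by rw [hf, comp_zero])
  have hdag : dag k = φ := (Category.id_comp _).symm.trans (hk.2.comp_dag_eq_of_comp_eq hφ)
  exact ⟨⟨dag k, hk.2, hdag ▸ hφ⟩⟩

theorem IsKer.comp_dag_eq_zero {K X Y : C} {f : X ⟶ Y} {k : K ⟶ Y} (hk : IsKer (dag f) k) :
    f ≫ dag k = 0 := by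
  rw [comp_eq_zero_iff_dag_comp_dag, dag_dag]
  exact hk.comp_zero

theorem IsKer.exists_dag_comp_eq_of_comp_eq_zero {K X Y Z : C} {f : X ⟶ Y} {k : K ⟶ Y}
    (hk : IsKer (dag f) k) {u : Y ⟶ Z} (hu : f ≫ u = 0) : ∃ w, dag k ≫ w = u := by
  obtain ⟨w, hw, -⟩ := hk.lift (dag u) (comp_eq_zero_iff_dag_comp_dag.mp hu)
  exact ⟨dag w, by rw [← dag_comp, hw, dag_dag]⟩

namespace IsImg

variable {I X Y : C} {f : X ⟶ Y} {i : I ⟶ Y}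

theorem comp_eq_zero_of_comp_eq_zero (hi : IsImg f i) {Z : C} {u : Y ⟶ Z}
    (hu : f ≫ u = 0) : i ≫ u = 0 := by
  obtain ⟨K, k, hk, hik⟩ := hi
  obtain ⟨w, rfl⟩ := hk.1.exists_dag_comp_eq_of_comp_eq_zero hu
  rw [← Category.assoc, hik.1.comp_zero, zero_comp]

theorem comp_dag_comp (hi : IsImg f i) : (f ≫ dag i) ≫ i = f := by
  obtain ⟨K, k, hk, hik⟩ := hi
  obtain ⟨h, hh, -⟩ := hik.1.lift f hk.1.comp_dag_eq_zero
  rw [hik.2.comp_dag_eq_of_comp_eq hh, hh]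

theorem zeroEpi_comp_dag (hi : IsImg f i) : ZeroEpi (f ≫ dag i) := by
  intro Z g hg
  have hig : i ≫ dag i ≫ g = 0 :=
    hi.comp_eq_zero_of_comp_eq_zero (by rw [← Category.assoc, hg])
  obtain ⟨K, k, -, hik⟩ := hi
  rwa [← Category.assoc, show i ≫ dag i = 𝟙 I from hik.2, Category.id_comp] at hig

theorem isIso_of_zeroEpi (hi : IsImg f i) (hf : ZeroEpi f) : IsIso i := by
  obtain ⟨K, k, hk, hik⟩ := hi
  exact hik.isIso_of_eq_zero (hf _ hk.1.comp_dag_eq_zero)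

end IsImg

end Dagger

open Dagger in
/-- every `f` factors as `f = i_f ∘ e_f` with `i_f = ker(coker f)`
a kernel and `e_f = i_f† ∘ f` a zero-epi; moreover the maps arising as `e_f` are
precisely the zero-epis (for a zero-epi `f` the image `i_f` is an iso). -/
theorem stmt9 {C : Type u} [Category.{v} C] [HasZeroMorphisms C] [HasZeroObject C]
    [DagKerCat C] {X Y I : C} (f : X ⟶ Y) (i : I ⟶ Y) (hi : IsImg f i) :
    ((f ≫ Dagger.dag i) ≫ i = f) ∧ ZeroEpi (f ≫ Dagger.dag i) ∧
    (ZeroEpi f → IsIso i) :=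
  ⟨hi.comp_dag_comp, hi.zeroEpi_comp_dag, hi.isIso_of_zeroEpi⟩
end

section
/- In a dagger kernel category, for each morphism f : X → Y the pullback functor f⁻¹ : KSub(Y) → KSub(X) has a left adjoint ∃_f given by taking the image: ∃_f(m) = ker(coker(f ∘ m)). Moreover ∃_f(m) = ((f†)⁻¹(m^⊥))^⊥. -/
open CategoryTheory Limits

universe v u

/-!
Everything reduces to the fact that a kernel is determined, as a subobject, by the maps it
annihilates: `g ≤ ker h ↔ g ≫ h = 0`. For the image `i` of `g` this gives
`i ≤ ker h ↔ g ≫ h = 0`, so both `∃_f m ≤ n` and `m ≤ f⁻¹ n` say `m ≫ f ≫ (n^⊥)† = 0`,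
because `n = ker (n^⊥)†`. For the second claim, `(f†)⁻¹(m^⊥) = ker (f† ≫ m†)` is the kernel
of `(m ≫ f)†`, whose orthocomplement is the image of `m ≫ f`.
-/

namespace Dagger

section

variable {C : Type u} [Category.{v} C] [HasZeroMorphisms C]

lemma SubLE.comp_eq_zero {K X Y Z : C} {f : X ⟶ Y} {k : K ⟶ X} {g : Z ⟶ X}
    (hg : SubLE g k) (hk : k ≫ f = 0) : g ≫ f = 0 := by
  obtain ⟨φ, rfl⟩ := hg
  rw [Category.assoc, hk, comp_zero]

namespace IsKer

variable {K X Y : C} {f : X ⟶ Y} {k : K ⟶ X}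

lemma subLE_iff (hk : IsKer f k) {Z : C} (g : Z ⟶ X) : SubLE g k ↔ g ≫ f = 0 := by
  refine ⟨fun hg => hg.comp_eq_zero hk.comp_zero, fun hg => ?_⟩
  obtain ⟨h, hh, -⟩ := hk.lift g hg
  exact ⟨h, hh⟩

lemma of_comp_eq_zero_iff {Y' : C} {f' : X ⟶ Y'} (hk : IsKer f k)
    (h : ∀ {Z : C} (g : Z ⟶ X), g ≫ f = 0 ↔ g ≫ f' = 0) : IsKer f' k :=
  ⟨(h k).1 hk.comp_zero, fun g hg => hk.lift g ((h g).2 hg)⟩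

lemma subEq {K' Y' : C} {f' : X ⟶ Y'} {k' : K' ⟶ X} (hk : IsKer f k) (hk' : IsKer f' k')
    (h : ∀ {Z : C} (g : Z ⟶ X), g ≫ f = 0 ↔ g ≫ f' = 0) : SubEq k k' := by
  have hk'' := hk.of_comp_eq_zero_iff h
  exact ⟨(hk'.subLE_iff k).2 hk''.comp_zero, (hk''.subLE_iff k').2 hk'.comp_zero⟩

end IsKer

end

variable {C : Type u} [Category.{v} C] [HasZeroMorphisms C] [Dagger C]

lemma dag_comp_eq_zero {X Y Z : C} {a : X ⟶ Y} {b : Y ⟶ Z} (h : a ≫ b = 0) :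
    dag b ≫ dag a = 0 := by
  rw [← dag_comp, h, dag_zero]

lemma SubLE.comp_dag_eq_zero {A B X Z : C} {a : A ⟶ X} {b : B ⟶ X} (h : SubLE a b)
    {g : Z ⟶ X} (hg : g ≫ dag b = 0) : g ≫ dag a = 0 := by
  obtain ⟨φ, rfl⟩ := h
  rw [dag_comp, ← Category.assoc, hg, zero_comp]

lemma SubEq.comp_dag_eq_zero_iff {A B X Z : C} {a : A ⟶ X} {b : B ⟶ X} (h : SubEq a b)
    (g : Z ⟶ X) : g ≫ dag a = 0 ↔ g ≫ dag b = 0 :=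
  ⟨h.2.comp_dag_eq_zero, h.1.comp_dag_eq_zero⟩

lemma SubEq.subEq_of_isOrthoOf {A B P Q X : C} {a : A ⟶ X} {b : B ⟶ X} {p : P ⟶ X}
    {q : Q ⟶ X} (h : SubEq a b) (hp : IsOrthoOf a p) (hq : IsOrthoOf b q) : SubEq p q :=
  hp.1.subEq hq.1 h.comp_dag_eq_zero_iff

lemma KernelMap.isOrthoOf_symm {M P X : C} {m : M ⟶ X} (hm : KernelMap m) {mp : P ⟶ X}
    (hmp : IsOrthoOf m mp) : IsOrthoOf mp m := by
  obtain ⟨Y, f, hk, hdm⟩ := hm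
  refine ⟨hk.of_comp_eq_zero_iff fun g => ⟨fun hg => ?_, fun hg => ?_⟩, hdm⟩
  · have hm' : m ≫ dag mp = 0 := by
      simpa only [dag_dag] using dag_comp_eq_zero hmp.1.comp_zero
    exact ((hk.subLE_iff g).2 hg).comp_eq_zero hm'
  · -- `f†` kills `m`, so `f = mp† ≫ h†` factors through `mp†`
    obtain ⟨h, hh⟩ := (hmp.1.subLE_iff (dag f)).2 (dag_comp_eq_zero hk.comp_zero)
    rw [← dag_dag f, ← hh, dag_comp, ← Category.assoc, hg, zero_comp]

lemma IsImg.subLE_iff {I N Z X Y : C} {g : Z ⟶ X} {i : I ⟶ X} {h : X ⟶ Y} {n : N ⟶ X}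
    (hi : IsImg g i) (hn : IsKer h n) : SubLE i n ↔ g ≫ h = 0 := by
  obtain ⟨K, k, hk, hik⟩ := hi
  rw [hn.subLE_iff]
  constructor
  · intro hih
    have hgi : SubLE g i := (hik.1.subLE_iff g).2 <| by
      simpa only [dag_dag] using dag_comp_eq_zero hk.1.comp_zero
    exact hgi.comp_eq_zero hih
  · intro hgh
    have hhk : SubLE (dag h) k := (hk.1.subLE_iff _).2 (dag_comp_eq_zero hgh)
    simpa only [dag_dag] using hhk.comp_dag_eq_zero hik.1.comp_zero

end Dagger

open Dagger in
/-- the pullback functor `f⁻¹` has a left adjoint `∃_f` given by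
the image `∃_f(m) = ker(coker(f ∘ m))`; moreover `∃_f(m) = ((f†)⁻¹(m^⊥))^⊥`. -/
theorem stmt11 {C : Type u} [Category.{v} C] [HasZeroMorphisms C] [HasZeroObject C]
    [DagKerCat C] {M X Y N I P : C} (f : X ⟶ Y)
    (m : M ⟶ X) (hm : KernelMap m) (n : N ⟶ Y) (hn : KernelMap n)
    (i : I ⟶ Y) (hi : IsImg (m ≫ f) i)
    (p : P ⟶ X) (hp : IsInvImg f n p) :
    (SubLE i n ↔ SubLE m p) ∧
    (∀ {MP Q R : C} (mp : MP ⟶ X) (q : Q ⟶ Y) (r : R ⟶ Y),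
      IsOrthoOf m mp → IsInvImg (Dagger.dag f) mp q → IsOrthoOf q r →
      SubEq r i) := by
  obtain ⟨NP, np, hnp, hp⟩ := hp
  refine ⟨?_, fun mp q r hmp hq hr => ?_⟩
  · rw [hi.subLE_iff (hn.isOrthoOf_symm hnp).1, hp.1.subLE_iff, Category.assoc]
  · obtain ⟨W, w, hw, hq⟩ := hq
    obtain ⟨K, k, hk, hik⟩ := hi
    have hwm : SubEq w m := hw.1.subEq (hm.isOrthoOf_symm hmp).1 fun _ => Iff.rfl
    have hqk : SubEq q k := hq.1.subEq hk.1 fun g => by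
      rw [dag_comp, ← Category.assoc, ← Category.assoc, hwm.comp_dag_eq_zero_iff]
    exact hqk.subEq_of_isOrthoOf hr hik
end

section
/- In a dagger kernel category, if zero-epis are (ordinary) epis, then every dagger mono is a kernel. -/
/-!
Factor `m = e ≫ i` through its image `i = ker (ker m†)†`. The first factor `e` is always a
zero-epi, hence an epi by hypothesis, and `e ≫ i ≫ m† = m ≫ m† = 𝟙` makes it split mono. So `e`
is an isomorphism and `m`, like `i`, is a kernel of `(ker m†)†`.
-/

open CategoryTheory Limits

universe v u

namespace Dagger

variable {C : Type u} [Category.{v} C] [HasZeroMorphisms C]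

theorem IsKer.iso_comp {K' K X Y : C} {f : X ⟶ Y} {k : K ⟶ X} (hk : IsKer f k)
    (e : K' ⟶ K) [IsIso e] : IsKer f (e ≫ k) := by
  refine ⟨by rw [Category.assoc, hk.comp_zero, Limits.comp_zero], fun g hg => ?_⟩
  obtain ⟨l, hl, hl_uniq⟩ := hk.lift g hg
  refine ⟨l ≫ inv e, by simpa using hl, fun y hy => ?_⟩
  rw [← hl_uniq (y ≫ e) (by simpa using hy)]
  simp

variable [Dagger C]

theorem DaggerMono.comp_dag {X Y : C} {m : X ⟶ Y} (hm : DaggerMono m) : m ≫ dag m = 𝟙 X := hm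

theorem dag_eq_zero_iff {X Y : C} {f : X ⟶ Y} : dag f = 0 ↔ f = 0 :=
  ⟨fun h => by rw [← dag_dag f, h, dag_zero], fun h => by rw [h, dag_zero]⟩

theorem DaggerMono.zeroMono {X Y : C} {m : X ⟶ Y} (hm : DaggerMono m) : ZeroMono m := by
  intro Z f hf
  simpa [hm.comp_dag] using congrArg (· ≫ dag m) hf

/-- In the factorisation `f = e ≫ i` of `f` through its image `i = ker (ker f†)†`,
the first factor `e` is a zero-epi. -/
theorem zeroEpi_of_comp_eq_image {K I X Y : C} {e : X ⟶ I} {i : I ⟶ Y} {k : K ⟶ Y}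
    (hk : IsDagKer (dag (e ≫ i)) k) (hi : IsDagKer (dag k) i) : ZeroEpi e := by
  intro Z g hg
  have hgi : (dag g ≫ i) ≫ dag (e ≫ i) = 0 := by
    rw [dag_comp, Category.assoc, ← Category.assoc i, hi.2.comp_dag, Category.id_comp,
      dag_comp_dag_eq_zero hg]
  obtain ⟨v, hv, -⟩ := hk.1.lift (dag g ≫ i) hgi
  -- `v = v ≫ k ≫ k†` and `i ≫ k† = 0`
  have hv0 : v = 0 := by
    simpa [hk.2.comp_dag, hi.1.comp_zero] using congrArg (· ≫ dag k) hv
  have hgi0 : dag g ≫ i = 0 := by rw [← hv, hv0, zero_comp]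
  exact dag_eq_zero_iff.mp (hi.2.zeroMono _ hgi0)

end Dagger

open Dagger in
/-- if zero-epis are (ordinary) epis, then every dagger mono is a
kernel. -/
theorem stmt12 {C : Type u} [Category.{v} C] [HasZeroMorphisms C] [HasZeroObject C]
    [DagKerCat C] (h : ∀ {X Y : C} (e : X ⟶ Y), ZeroEpi e → Epi e)
    {M X : C} (m : M ⟶ X) (hm : DaggerMono m) : KernelMap m := by
  obtain ⟨K, k, hk⟩ := DagKerCat.hasKer (dag m)
  obtain ⟨I, i, hi⟩ := DagKerCat.hasKer (dag k)
  have hmk : m ≫ dag k = 0 := by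
    simpa only [dag_dag] using dag_comp_dag_eq_zero hk.1.comp_zero
  obtain ⟨e, rfl, -⟩ := hi.1.lift m hmk
  have : IsSplitMono e := .mk' ⟨i ≫ dag (e ≫ i), by rw [← Category.assoc]; exact hm⟩
  have : Epi e := h e (zeroEpi_of_comp_eq_image hk hi)
  have : IsIso e := isIso_of_epi_of_isSplitMono e
  exact ⟨K, dag k, hi.1.iso_comp e, hm⟩
end

section
/- For a Boolean algebra B, the category B̂ whose objects are elements of B and whose morphisms x → y are elements f ≤ x ∧ y, with composition by meet, identity x, and dagger f† = f, is a Boolean dagger kernel category: it has zero object 0, the kernel of f : x → y is ¬f ∧ x, and KSub(x) is the principal downset ↓x. -/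
open CategoryTheory Limits

universe v u

/-! The category `B̂` associated to a Boolean algebra `B`: objects are elements
of `B`, morphisms `x ⟶ y` are elements `f ≤ x ⊓ y`, composition is meet,
identity on `x` is `x`, and the dagger is the identity on morphisms. -/

structure BHat (B : Type u) where
  el : B

variable {B : Type u} [BooleanAlgebra B]

instance : Category.{u} (BHat B) where
  Hom x y := {f : B // f ≤ x.el ⊓ y.el}
  id x := ⟨x.el, le_inf le_rfl le_rfl⟩
  comp f g := ⟨f.1 ⊓ g.1,
    le_inf (inf_le_left.trans (f.2.trans inf_le_left))
      (inf_le_right.trans (g.2.trans inf_le_right))⟩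
  id_comp f := Subtype.ext (inf_eq_right.mpr (f.2.trans inf_le_left))
  comp_id f := Subtype.ext (inf_eq_left.mpr (f.2.trans inf_le_right))
  assoc f g h := Subtype.ext (inf_assoc _ _ _)

instance : HasZeroMorphisms (BHat B) where
  zero x y := ⟨⟨⊥, bot_le⟩⟩
  zero_comp x {y z} f := Subtype.ext (by show ⊥ ⊓ f.1 = ⊥; simp)
  comp_zero {x y} f z := Subtype.ext (by show f.1 ⊓ ⊥ = ⊥; simp)

instance : Dagger (BHat B) where
  dag f := ⟨f.1, le_inf (f.2.trans inf_le_right) (f.2.trans inf_le_left)⟩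
  dag_dag f := Subtype.ext rfl
  dag_comp f g := Subtype.ext (inf_comm _ _)
  dag_id x := Subtype.ext rfl
  dag_zero x y := Subtype.ext rfl

/-- the canonical kernel map `b ↣ x` for `b ≤ x` in `B` -/
def BHat.canon (b : B) (x : BHat B) (h : b ≤ x.el) : BHat.mk b ⟶ x :=
  ⟨b, le_inf le_rfl h⟩

/-! A morphism of `B̂` is determined by its underlying element, and `m : M ⟶ x` factors through
`n : N ⟶ x` exactly when `m ≤ n` in `B` (the factorisation is `m` itself). Hence the subobject
order on morphisms into `x` is the order of `↓x`, the meet of two subobjects is their meet in `B`,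
and `ker f = ¬f ∧ x` because `g ∧ f = ⊥` iff `g ≤ ¬f`. -/

namespace BHat

open Dagger

theorem hom_ext {x y : BHat B} {f g : x ⟶ y} (h : f.1 = g.1) : f = g := Subtype.ext h

@[simp] theorem comp_val {x y z : BHat B} (f : x ⟶ y) (g : y ⟶ z) : (f ≫ g).1 = f.1 ⊓ g.1 := rfl

@[simp] theorem id_val (x : BHat B) : (𝟙 x : x ⟶ x).1 = x.el := rfl

@[simp] theorem zero_val (x y : BHat B) : (0 : x ⟶ y).1 = ⊥ := rfl

@[simp] theorem dag_val {x y : BHat B} (f : x ⟶ y) : (dag f).1 = f.1 := rfl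

theorem val_le_dom {x y : BHat B} (f : x ⟶ y) : f.1 ≤ x.el := f.2.trans inf_le_left

theorem val_le_cod {x y : BHat B} (f : x ⟶ y) : f.1 ≤ y.el := f.2.trans inf_le_right

theorem comp_val_of_le {x y z : BHat B} (f : x ⟶ y) (g : y ⟶ z) (h : y.el ≤ g.1) :
    (f ≫ g).1 = f.1 :=
  inf_eq_left.mpr ((val_le_cod f).trans h)

instance subsingleton_hom_bot (y : BHat B) : Subsingleton (mk ⊥ ⟶ y) :=
  ⟨fun f g => hom_ext ((le_bot_iff.mp (val_le_dom f)).trans (le_bot_iff.mp (val_le_dom g)).symm)⟩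

instance subsingleton_hom_to_bot (y : BHat B) : Subsingleton (y ⟶ mk ⊥) :=
  ⟨fun f g => hom_ext ((le_bot_iff.mp (val_le_cod f)).trans (le_bot_iff.mp (val_le_cod g)).symm)⟩

theorem isZero_bot : IsZero (mk (⊥ : B)) :=
  ⟨fun _ => ⟨⟨⟨0⟩, fun _ => Subsingleton.elim _ _⟩⟩, fun _ => ⟨⟨⟨0⟩, fun _ => Subsingleton.elim _ _⟩⟩⟩

theorem subLE_iff {M N x : BHat B} (m : M ⟶ x) (n : N ⟶ x) : SubLE m n ↔ m.1 ≤ n.1 := by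
  constructor
  · rintro ⟨φ, rfl⟩
    exact inf_le_right
  · intro h
    exact ⟨⟨m.1, le_inf (val_le_dom m) (h.trans (val_le_dom n))⟩, hom_ext (inf_eq_left.mpr h)⟩

theorem isDagKer_of_el_eq {M x y : BHat B} (f : x ⟶ y) (k : M ⟶ x) (hk : k.1 = M.el)
    (hM : M.el = f.1ᶜ ⊓ x.el) : IsDagKer f k := by
  have hg_le {Z : BHat B} (g : Z ⟶ x) (hg : g ≫ f = 0) : g.1 ≤ M.el := by
    have hdisj : Disjoint g.1 f.1 := disjoint_iff.mpr (congrArg Subtype.val hg)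
    exact hM ▸ le_inf (le_compl_iff_disjoint_right.mpr hdisj) (val_le_cod g)
  refine ⟨⟨hom_ext ?_, fun g hg => ⟨⟨g.1, le_inf (val_le_dom g) (hg_le g hg)⟩, ?_, ?_⟩⟩, ?_⟩
  · show k.1 ⊓ f.1 = ⊥
    rw [hk, hM, inf_right_comm, compl_inf_self, bot_inf_eq]
  · exact hom_ext (comp_val_of_le _ k hk.ge)
  · intro h hh
    exact hom_ext ((comp_val_of_le h k hk.ge).symm.trans (congrArg Subtype.val hh))
  · exact hom_ext (by simp only [comp_val, dag_val, id_val, inf_idem, hk])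

theorem kernelMap_canon (b : B) (x : BHat B) (hb : b ≤ x.el) : KernelMap (canon b x hb) := by
  refine ⟨x, ⟨bᶜ ⊓ x.el, le_inf inf_le_right inf_le_right⟩, isDagKer_of_el_eq _ _ rfl ?_⟩
  show b = (bᶜ ⊓ x.el)ᶜ ⊓ x.el
  rw [compl_inf, compl_compl, inf_sup_right, compl_inf_self, sup_bot_eq, inf_eq_left.mpr hb]

theorem isMeet_canon_inf {M N x : BHat B} (m : M ⟶ x) (n : N ⟶ x) :
    IsMeet m n (canon (m.1 ⊓ n.1) x (inf_le_left.trans (val_le_cod m))) := by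
  simp only [IsMeet, subLE_iff]
  exact ⟨kernelMap_canon _ _ _, inf_le_left, inf_le_right, fun _ _ hm hn => le_inf hm hn⟩

end BHat

open Dagger in
/-- for a Boolean algebra `B`, the category `B̂` is a Boolean
dagger kernel category: `⊥` is a zero object, the kernel of `f : x ⟶ y` is
`¬f ∧ x`, Booleanness holds, and `KSub(x)` is the principal downset `↓x`. -/
theorem stmt17 :
    IsZero (BHat.mk (⊥ : B)) ∧
    (∀ (x y : BHat B) (f : x ⟶ y),
      IsDagKer f (BHat.canon (f.1ᶜ ⊓ x.el) x inf_le_right)) ∧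
    (∀ {M N x : BHat B} (m : M ⟶ x) (n : N ⟶ x), KernelMap m → KernelMap n →
      (∀ {W : BHat B} (w : W ⟶ x), IsMeet m n w → w = 0) →
      n ≫ Dagger.dag m = 0) ∧
    (∀ (x : BHat B) {M : BHat B} (k : M ⟶ x), KernelMap k →
      SubEq k (BHat.canon k.1 x (k.2.trans inf_le_right))) ∧
    (∀ (x : BHat B) (a b : B) (ha : a ≤ x.el) (hb : b ≤ x.el),
      SubLE (BHat.canon a x ha) (BHat.canon b x hb) ↔ a ≤ b) := by
  refine ⟨BHat.isZero_bot, fun x y f => BHat.isDagKer_of_el_eq f _ rfl rfl, ?_, ?_, ?_⟩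
  · intro M N x m n _ _ hmeet
    have hmn : m.1 ⊓ n.1 = ⊥ := congrArg Subtype.val (hmeet _ (BHat.isMeet_canon_inf m n))
    exact BHat.hom_ext (by simpa only [BHat.comp_val, BHat.dag_val, BHat.zero_val, inf_comm] using hmn)
  · intro x M k _
    exact ⟨(BHat.subLE_iff _ _).mpr le_rfl, (BHat.subLE_iff _ _).mpr le_rfl⟩
  · intro x a b ha hb
    exact BHat.subLE_iff _ _
end
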